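/- arXiv:2403.00646 — 2 statements merged into one kernel-verified Lean document; each statement's English description precedes it below -/
import Mathlib

section
/- Every energy-preserving Hessian can be parameterized by skew-symmetric blocks: if H ∈ ℝ^{n×n²} satisfies zᵀH(z⊗z) = 0 for all z ∈ ℝⁿ, then there exist skew-symmetric matrices H̃₁, …, H̃ₙ ∈ ℝ^{n×n} such that H̃ := [H̃₁, …, H̃ₙ] satisfies H̃(z⊗z) = H(z⊗z) for all z ∈ ℝⁿ. -/
/-!
Write `h a b d = H a (b, d)`. The cubic form `z ↦ zᵀH(z⊗z)` vanishes identically, so by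
polarization the full symmetrization of `h` vanishes. Each coordinate of `H(z⊗z)` only sees
the part of its row that is symmetric in `(b, d)`. The blocks
`H̃ⱼ i k = (h i j k + h i k j - h k j i - h k i j) / 3` are visibly skew in `(i, k)`, and the
vanishing symmetrization of `h` says exactly that `H̃` and `H` have the same symmetric parts.
-/

open Matrix

/-- The Kronecker product of two vectors in `ℝⁿ`, indexed by pairs:
`(z ⊗ w)_{(j,k)} = z_j w_k`. -/
def kron {n : ℕ} (z w : Fin n → ℝ) : Fin n × Fin n → ℝ := fun p => z p.1 * w p.2

theorem dotProduct_eq_of_add_swap_eq {ι R : Type*} [Fintype ι] [CommRing R] [IsAddTorsionFree R]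
    {u v w : ι × ι → R} (hw : ∀ p, w p.swap = w p)
    (h : ∀ p, u p + u p.swap = v p + v p.swap) : u ⬝ᵥ w = v ⬝ᵥ w := by
  have two_smul_eq (f : ι × ι → R) : 2 • (f ⬝ᵥ w) = ∑ p, (f p + f p.swap) * w p := by
    have swap_sum : ∑ p, f p.swap * w p = f ⬝ᵥ w :=
      Fintype.sum_equiv (Equiv.prodComm ι ι) _ _ fun p => by simp [hw]
    simp only [add_mul, Finset.sum_add_distrib, swap_sum, two_nsmul, dotProduct]
  apply IsAddTorsionFree.nsmul_right_injective two_ne_zero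
  simp only [two_smul_eq, h]

theorem kron_add_left {n : ℕ} (x y w : Fin n → ℝ) : kron (x + y) w = kron x w + kron y w := by
  ext p; simp [kron, add_mul]

theorem kron_add_right {n : ℕ} (x y w : Fin n → ℝ) : kron w (x + y) = kron w x + kron w y := by
  ext p; simp [kron, mul_add]

theorem kron_single_one {n : ℕ} (i j : Fin n) :
    kron (Pi.single i 1) (Pi.single j 1) = Pi.single (i, j) 1 := by
  ext ⟨a, b⟩
  simp only [kron, Pi.single_apply, Prod.mk.injEq]
  split_ifs <;> simp_all

theorem kron_swap {n : ℕ} (z : Fin n → ℝ) (p : Fin n × Fin n) : kron z z p.swap = kron z z p :=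
  mul_comm _ _

def IsEnergyPreserving {n : ℕ} (H : Matrix (Fin n) (Fin n × Fin n) ℝ) : Prop :=
  ∀ z : Fin n → ℝ, z ⬝ᵥ H *ᵥ kron z z = 0

theorem IsEnergyPreserving.polarization {n : ℕ} {H : Matrix (Fin n) (Fin n × Fin n) ℝ}
    (hH : IsEnergyPreserving H) (x y w : Fin n → ℝ) :
    x ⬝ᵥ H *ᵥ kron y w + x ⬝ᵥ H *ᵥ kron w y + y ⬝ᵥ H *ᵥ kron x w + y ⬝ᵥ H *ᵥ kron w x
      + w ⬝ᵥ H *ᵥ kron x y + w ⬝ᵥ H *ᵥ kron y x = 0 := by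
  have hxyw := hH (x + y + w)
  have hxy := hH (x + y)
  have hxw := hH (x + w)
  have hyw := hH (y + w)
  simp only [kron_add_left, kron_add_right, mulVec_add, add_dotProduct, dotProduct_add]
    at hxyw hxy hxw hyw
  linarith [hH x, hH y, hH w]

theorem IsEnergyPreserving.sum_perm_eq_zero {n : ℕ} {H : Matrix (Fin n) (Fin n × Fin n) ℝ}
    (hH : IsEnergyPreserving H) (a b d : Fin n) :
    H a (b, d) + H a (d, b) + H b (a, d) + H b (d, a) + H d (a, b) + H d (b, a) = 0 := by
  simpa only [kron_single_one, mulVec_single_one, single_dotProduct, one_mul, col_apply]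
    using hH.polarization (Pi.single a 1) (Pi.single b 1) (Pi.single d 1)

noncomputable def skewBlocks {n : ℕ} (H : Matrix (Fin n) (Fin n × Fin n) ℝ) (j : Fin n) :
    Matrix (Fin n) (Fin n) ℝ :=
  of fun i k => (H i (j, k) + H i (k, j) - H k (j, i) - H k (i, j)) / 3

theorem skewBlocks_transpose {n : ℕ} (H : Matrix (Fin n) (Fin n × Fin n) ℝ) (j : Fin n) :
    (skewBlocks H j)ᵀ = -skewBlocks H j := by
  ext i k
  rw [transpose_apply, neg_apply]
  simp only [skewBlocks, of_apply]
  ring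

theorem IsEnergyPreserving.skewBlocks_add_swap {n : ℕ} {H : Matrix (Fin n) (Fin n × Fin n) ℝ}
    (hH : IsEnergyPreserving H) (a j k : Fin n) :
    skewBlocks H j a k + skewBlocks H k a j = H a (j, k) + H a (k, j) := by
  have := hH.sum_perm_eq_zero a j k
  simp only [skewBlocks, of_apply]
  linarith

/-- Every energy-preserving Hessian `H ∈ ℝ^{n×n²}` (i.e. `zᵀH(z⊗z) = 0` for all
`z`) can be replaced, without changing the vector field `z ↦ H(z⊗z)`, by a
Hessian `H̃ = [H̃₁, …, H̃ₙ]` whose blocks `H̃ᵢ` are all skew-symmetric. -/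
theorem stmt_5 {n : ℕ} (H : Matrix (Fin n) (Fin n × Fin n) ℝ)
    (hEP : ∀ z : Fin n → ℝ, z ⬝ᵥ H.mulVec (kron z z) = 0) :
    ∃ Ht : Fin n → Matrix (Fin n) (Fin n) ℝ,
      (∀ i, (Ht i)ᵀ = -(Ht i)) ∧
      ∀ z : Fin n → ℝ,
        (Matrix.of fun a (p : Fin n × Fin n) => Ht p.1 a p.2).mulVec (kron z z)
          = H.mulVec (kron z z) := by
  have hH : IsEnergyPreserving H := hEP
  refine ⟨skewBlocks H, skewBlocks_transpose H, fun z => funext fun a => ?_⟩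
  exact dotProduct_eq_of_add_swap_eq (kron_swap z) fun p => hH.skewBlocks_add_swap a p.1 p.2
end

section
/- Under the assumptions of the differential inequality Ė(x(t)) ≤ -σ_min(R)‖x(t)‖₂² + c‖x(t)‖₂ with c = ‖B‖₂‖u‖_{L∞} and r = c/σ_min(R), the state norm is strictly decreasing whenever ‖x(t)‖₂ > r; consequently every solution of ẋ = (J-R)x + H(x⊗x) + Bu with bounded input u satisfies ‖x(t)‖₂ ≤ max{‖x(0)‖₂, r} for all t ≥ 0. -/
open Matrix

/-- The Euclidean 2-norm of a vector in `ℝⁿ`. -/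
noncomputable def norm2 {n : ℕ} (v : Fin n → ℝ) : ℝ := Real.sqrt (v ⬝ᵥ v)

/-- The spectral norm (L2 operator norm) of a real matrix. -/
noncomputable def specNorm {n m : ℕ} (B : Matrix (Fin n) (Fin m) ℝ) : ℝ :=
  sSup {c | ∃ v : Fin m → ℝ, norm2 v ≤ 1 ∧ c = norm2 (B.mulVec v)}

/-- The smallest eigenvalue of a Hermitian real matrix. -/
noncomputable def sigmaMin {n : ℕ} (R : Matrix (Fin n) (Fin n) ℝ)
    (hR : R.IsHermitian) : ℝ := ⨅ i, hR.eigenvalues i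

/-!
Along a trajectory, `E = ‖x‖²` has `Ė = 2 xᵀ((J - R)x + H(x ⊗ x) + Bu)`. The `J`- and `H`-terms
vanish by skew-symmetry and energy preservation, and the Rayleigh bound `xᵀRx ≥ σ_min ‖x‖²` with
Cauchy–Schwarz gives `Ė ≤ 2‖x‖(‖B‖₂ U - σ_min ‖x‖)`, which is negative as soon as `‖x‖ > r`.
Strict decrease above `r` is then the mean value theorem, and the bound `max {‖x(0)‖, r}` holds
because `E` cannot cross a level above `r²` upwards.
-/

open scoped Matrix.Norms.L2Operator

theorem norm2_eq_norm {n : ℕ} (v : Fin n → ℝ) :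
    norm2 v = ‖(WithLp.toLp 2 v : EuclideanSpace ℝ (Fin n))‖ := by
  rw [norm_eq_sqrt_real_inner, EuclideanSpace.inner_toLp_toLp, star_trivial, norm2]

theorem dotProduct_le_norm2_mul_norm2 {n : ℕ} (v w : Fin n → ℝ) :
    v ⬝ᵥ w ≤ norm2 v * norm2 w := by
  rw [norm2_eq_norm, norm2_eq_norm, dotProduct_comm, ← star_trivial v,
    ← EuclideanSpace.inner_toLp_toLp]
  exact real_inner_le_norm _ _

theorem norm2_nonneg {n : ℕ} (v : Fin n → ℝ) : 0 ≤ norm2 v := Real.sqrt_nonneg _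

theorem norm2_sq {n : ℕ} (v : Fin n → ℝ) : norm2 v ^ 2 = v ⬝ᵥ v :=
  Real.sq_sqrt (Finset.sum_nonneg fun i _ => mul_self_nonneg (v i))

theorem norm2_pos_iff {n : ℕ} {v : Fin n → ℝ} : 0 < norm2 v ↔ v ≠ 0 := by
  rw [norm2_eq_norm, norm_pos_iff, Ne, WithLp.toLp_eq_zero]

theorem specNorm_eq_l2_opNorm {n m : ℕ} (B : Matrix (Fin n) (Fin m) ℝ) :
    specNorm B = ‖B‖ := by
  have hbound : ∀ v : Fin m → ℝ, norm2 v ≤ 1 → norm2 (B *ᵥ v) ≤ ‖B‖ := fun v hv => by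
    rw [norm2_eq_norm] at hv ⊢
    exact (B.l2_opNorm_mulVec (WithLp.toLp 2 v)).trans (mul_le_of_le_one_right (norm_nonneg B) hv)
  have hbdd : BddAbove {c | ∃ v : Fin m → ℝ, norm2 v ≤ 1 ∧ c = norm2 (B *ᵥ v)} :=
    ⟨‖B‖, by rintro _ ⟨v, hv, rfl⟩; exact hbound v hv⟩
  have hzero : norm2 (B *ᵥ 0) ∈ {c | ∃ v : Fin m → ℝ, norm2 v ≤ 1 ∧ c = norm2 (B *ᵥ v)} :=
    ⟨0, by simp [norm2], rfl⟩
  refine le_antisymm (csSup_le ⟨_, hzero⟩ fun _ ⟨v, hv, hc⟩ => hc ▸ hbound v hv) ?_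
  rw [Matrix.l2_opNorm_def]
  refine ContinuousLinearMap.opNorm_le_of_unit_norm ?_ fun x hx => ?_
  · exact (norm2_nonneg _).trans (le_csSup hbdd hzero)
  · refine le_csSup hbdd ⟨x.ofLp, by rw [norm2_eq_norm]; exact hx.le, ?_⟩
    rw [norm2_eq_norm]
    rfl

theorem specNorm_nonneg {n m : ℕ} (B : Matrix (Fin n) (Fin m) ℝ) : 0 ≤ specNorm B :=
  specNorm_eq_l2_opNorm B ▸ norm_nonneg B

theorem norm2_mulVec_le {n m : ℕ} (B : Matrix (Fin n) (Fin m) ℝ) (v : Fin m → ℝ) :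
    norm2 (B *ᵥ v) ≤ specNorm B * norm2 v := by
  rw [specNorm_eq_l2_opNorm, norm2_eq_norm, norm2_eq_norm]
  exact B.l2_opNorm_mulVec (WithLp.toLp 2 v)

open scoped MatrixOrder in
theorem sigmaMin_mul_dotProduct_self_le {n : ℕ} {R : Matrix (Fin n) (Fin n) ℝ}
    (hR : R.IsHermitian) (v : Fin n → ℝ) : sigmaMin R hR * (v ⬝ᵥ v) ≤ v ⬝ᵥ R *ᵥ v := by
  have hle : algebraMap ℝ (Matrix (Fin n) (Fin n) ℝ) (sigmaMin R hR) ≤ R := by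
    rw [algebraMap_le_iff_le_spectrum hR.isSelfAdjoint, hR.spectrum_real_eq_range_eigenvalues]
    rintro _ ⟨i, rfl⟩
    exact ciInf_le (Finite.bddBelow_range _) i
  simpa [sub_mulVec, dotProduct_sub, Algebra.algebraMap_eq_smul_one, smul_mulVec, sub_nonneg]
    using (le_iff.1 hle).dotProduct_mulVec_nonneg v

theorem specNorm_mul_div_sigmaMin_nonneg {n m : ℕ} (B : Matrix (Fin n) (Fin m) ℝ)
    {R : Matrix (Fin n) (Fin n) ℝ} (hR : R.PosDef) {U : ℝ} (hU : 0 ≤ U) :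
    0 ≤ specNorm B * U / sigmaMin R hR.1 :=
  div_nonneg (mul_nonneg (specNorm_nonneg B) hU)
    (Real.iInf_nonneg fun i => (hR.eigenvalues_pos i).le)

theorem sigmaMin_pos {n : ℕ} [Nonempty (Fin n)] {R : Matrix (Fin n) (Fin n) ℝ} (hR : R.PosDef) :
    0 < sigmaMin R hR.1 := by
  obtain ⟨i, hi⟩ := exists_eq_ciInf_of_finite (f := hR.1.eigenvalues)
  rw [sigmaMin, ← hi]
  exact hR.eigenvalues_pos i

theorem dotProduct_mulVec_self_eq_zero {n : ℕ} {J : Matrix (Fin n) (Fin n) ℝ} (hJ : Jᵀ = -J)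
    (v : Fin n → ℝ) : v ⬝ᵥ J *ᵥ v = 0 := by
  have h : v ⬝ᵥ J *ᵥ v = -(v ⬝ᵥ J *ᵥ v) := by
    conv_lhs => rw [dotProduct_mulVec, ← mulVec_transpose, hJ, neg_mulVec, neg_dotProduct,
      dotProduct_comm]
  linarith

theorem HasDerivAt.dotProduct {ι : Type*} [Fintype ι] {x y : ℝ → ι → ℝ} {x' y' : ι → ℝ} {t : ℝ}
    (hx : HasDerivAt x x' t) (hy : HasDerivAt y y' t) :
    HasDerivAt (fun s => x s ⬝ᵥ y s) (x' ⬝ᵥ y t + x t ⬝ᵥ y') t := by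
  have h : HasDerivAt (fun s => ∑ i, x s i * y s i) (∑ i, (x' i * y t i + x t i * y' i)) t :=
    HasDerivAt.fun_sum fun i _ => (hasDerivAt_pi.1 hx i).mul (hasDerivAt_pi.1 hy i)
  rwa [Finset.sum_add_distrib] at h

theorem HasDerivAt.dotProduct_self {ι : Type*} [Fintype ι] {x : ℝ → ι → ℝ} {x' : ι → ℝ} {t : ℝ}
    (hx : HasDerivAt x x' t) : HasDerivAt (fun s => x s ⬝ᵥ x s) (2 * (x t ⬝ᵥ x')) t := by
  simpa only [dotProduct_comm x', two_mul] using hx.dotProduct hx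

theorem le_max_of_hasDerivAt_nonpos {f f' : ℝ → ℝ} {a t₀ t : ℝ}
    (hf : ∀ s, HasDerivAt f (f' s) s) (hf' : ∀ s, t₀ ≤ s → a < f s → f' s ≤ 0) (ht : t₀ ≤ t) :
    f t ≤ max (f t₀) a := by
  set M := max (f t₀) a
  have hcont : Continuous f := continuous_iff_continuousAt.2 fun s => (hf s).continuousAt
  -- compare with the barriers `M + ε (s - t₀ + 1)`, which `f` can only touch above level `a`
  have hbarrier : ∀ ε > 0, f t ≤ M + ε * (t - t₀ + 1) := fun ε hε => by
    refine image_le_of_deriv_right_lt_deriv_boundary' (B := fun s => M + ε * (s - t₀ + 1))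
      (B' := fun _ => ε) hcont.continuousOn (fun s _ => (hf s).hasDerivWithinAt) ?_
      (by fun_prop) (fun s _ => ?_) (fun s hs hfs => ?_) ⟨ht, le_rfl⟩
    · nlinarith [le_max_left (f t₀) a]
    · simpa using ((hasDerivAt_id s).sub_const t₀ |>.add_const 1 |>.const_mul ε |>.const_add M
        |>.hasDerivWithinAt)
    · have : a < f s := by nlinarith [le_max_right (f t₀) a, hs.1]
      linarith [hf' s hs.1 this]
  refine le_of_forall_pos_le_add fun δ hδ => ?_
  have hpos : 0 < t - t₀ + 1 := by linarith
  simpa [div_mul_cancel₀ δ hpos.ne'] using hbarrier (δ / (t - t₀ + 1)) (div_pos hδ hpos)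

section QuadraticField

variable {n m : ℕ} {J R : Matrix (Fin n) (Fin n) ℝ} {B : Matrix (Fin n) (Fin m) ℝ}
  {H : Matrix (Fin n) (Fin n × Fin n) ℝ}

theorem dotProduct_quadraticField_le (hJ : Jᵀ = -J) (hR : R.IsHermitian)
    (hEP : ∀ z : Fin n → ℝ, z ⬝ᵥ H *ᵥ kron z z = 0) (v : Fin n → ℝ) (w : Fin m → ℝ) :
    v ⬝ᵥ ((J - R) *ᵥ v + H *ᵥ kron v v + B *ᵥ w) ≤
      norm2 v * (specNorm B * norm2 w - sigmaMin R hR * norm2 v) := by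
  have hRv := sigmaMin_mul_dotProduct_self_le hR v
  have hBw : v ⬝ᵥ B *ᵥ w ≤ norm2 v * (specNorm B * norm2 w) :=
    (dotProduct_le_norm2_mul_norm2 v _).trans
      (mul_le_mul_of_nonneg_left (norm2_mulVec_le B w) (norm2_nonneg v))
  rw [← norm2_sq] at hRv
  rw [sub_mulVec, dotProduct_add, dotProduct_add, dotProduct_sub,
    dotProduct_mulVec_self_eq_zero hJ, hEP]
  linarith

theorem dotProduct_quadraticField_neg (hJ : Jᵀ = -J) (hR : R.PosDef)
    (hEP : ∀ z : Fin n → ℝ, z ⬝ᵥ H *ᵥ kron z z = 0) {v : Fin n → ℝ} {w : Fin m → ℝ} {U : ℝ}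
    (hw : norm2 w ≤ U) (hv : specNorm B * U / sigmaMin R hR.1 < norm2 v) :
    v ⬝ᵥ ((J - R) *ᵥ v + H *ᵥ kron v v + B *ᵥ w) < 0 := by
  have hN : 0 < norm2 v :=
    (specNorm_mul_div_sigmaMin_nonneg B hR ((norm2_nonneg w).trans hw)).trans_lt hv
  obtain ⟨i, -⟩ := Function.ne_iff.1 (norm2_pos_iff.1 hN)
  have : Nonempty (Fin n) := ⟨i⟩
  have hσN : specNorm B * U < sigmaMin R hR.1 * norm2 v := (div_lt_iff₀' (sigmaMin_pos hR)).1 hv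
  calc _ ≤ norm2 v * (specNorm B * norm2 w - sigmaMin R hR.1 * norm2 v) :=
        dotProduct_quadraticField_le hJ hR.1 hEP v w
    _ ≤ norm2 v * (specNorm B * U - sigmaMin R hR.1 * norm2 v) := by
      gcongr; exact specNorm_nonneg B
    _ < 0 := mul_neg_of_pos_of_neg hN (by linarith)

end QuadraticField

/-- For `ẋ = (J-R)x + H(x⊗x) + Bu` with `J` skew-symmetric, `R` symmetric
positive definite, `H` energy-preserving and `‖u(t)‖₂ ≤ U`, letting
`r = ‖B‖₂ U / σ_min(R)`: the state norm is strictly decreasing while it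
exceeds `r`, and `‖x(t)‖₂ ≤ max {‖x(0)‖₂, r}` for all `t ≥ 0`. -/
theorem stmt_7 {n m : ℕ} (J R : Matrix (Fin n) (Fin n) ℝ)
    (B : Matrix (Fin n) (Fin m) ℝ)
    (H : Matrix (Fin n) (Fin n × Fin n) ℝ)
    (hJ : Jᵀ = -J) (hR : R.PosDef)
    (hEP : ∀ z : Fin n → ℝ, z ⬝ᵥ H.mulVec (kron z z) = 0)
    (u : ℝ → Fin m → ℝ) (U : ℝ) (hU : ∀ t : ℝ, norm2 (u t) ≤ U)
    (x : ℝ → Fin n → ℝ)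
    (hx : ∀ t : ℝ, HasDerivAt x
      ((J - R).mulVec (x t) + H.mulVec (kron (x t) (x t)) + B.mulVec (u t)) t) :
    (∀ t₀ t₁ : ℝ, 0 ≤ t₀ → t₀ < t₁ →
      (∀ s ∈ Set.Icc t₀ t₁,
        specNorm B * U / sigmaMin R hR.1 < norm2 (x s)) →
      norm2 (x t₁) < norm2 (x t₀)) ∧
    (∀ t : ℝ, 0 ≤ t →
      norm2 (x t) ≤ max (norm2 (x 0)) (specNorm B * U / sigmaMin R hR.1)) := by
  set r := specNorm B * U / sigmaMin R hR.1
  set E : ℝ → ℝ := fun s => x s ⬝ᵥ x s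
  set E' : ℝ → ℝ := fun s =>
    2 * (x s ⬝ᵥ ((J - R) *ᵥ x s + H *ᵥ kron (x s) (x s) + B *ᵥ u s))
  have hE : ∀ s, HasDerivAt E (E' s) s := fun s => (hx s).dotProduct_self
  have hE' : ∀ s, r < norm2 (x s) → E' s < 0 := fun s hs =>
    mul_neg_of_pos_of_neg two_pos (dotProduct_quadraticField_neg hJ hR hEP (hU s) hs)
  refine ⟨fun t₀ t₁ _ ht hlarge => ?_, fun t ht => ?_⟩
  · have hEcont : Continuous E := continuous_iff_continuousAt.2 fun s => (hE s).continuousAt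
    have hanti : StrictAntiOn E (Set.Icc t₀ t₁) :=
      strictAntiOn_of_deriv_neg (convex_Icc t₀ t₁) hEcont.continuousOn fun s hs =>
        (hE s).deriv ▸ hE' s (hlarge s (interior_subset hs))
    exact Real.sqrt_lt_sqrt (norm2_sq (x t₁) ▸ sq_nonneg _)
      (hanti ⟨le_rfl, ht.le⟩ ⟨ht.le, le_rfl⟩ ht)
  · have hr : 0 ≤ r := specNorm_mul_div_sigmaMin_nonneg B hR ((norm2_nonneg _).trans (hU 0))
    have hEt : E t ≤ max (E 0) (r ^ 2) := le_max_of_hasDerivAt_nonpos hE (fun s _ hs =>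
      (hE' s (lt_of_pow_lt_pow_left₀ 2 (norm2_nonneg _) (by rwa [norm2_sq]))).le) ht
    calc norm2 (x t) = √(E t) := rfl
      _ ≤ √(max (E 0) (r ^ 2)) := Real.sqrt_le_sqrt hEt
      _ = max (norm2 (x 0)) r := by rw [Real.sqrt_monotone.map_max, Real.sqrt_sq hr]; rfl
end
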